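/- arXiv:2312.08812 — 4 statements merged into one kernel-verified Lean document; each statement's English description precedes it below -/
import Mathlib

section
/- Let T₁, T₂ be doubly commuting contractions on a Hilbert space H. Then the subspace H_u = ⋂_{k≥0} [ker(I - T₁*ᵏT₁ᵏ) ∩ ker(I - T₁ᵏT₁*ᵏ)] is a reducing subspace for T₂. -/
open ContinuousLinearMap

/-- The unitary part subspace of the canonical decomposition of a contraction `T`. -/
noncomputable def unitaryPart {H : Type*} [NormedAddCommGroup H] [InnerProductSpace ℂ H]
    [CompleteSpace H] (T : H →L[ℂ] H) : Set H :=
  ⋂ k : ℕ, ((LinearMap.ker (((1 : H →L[ℂ] H) - (adjoint T) ^ k * T ^ k : H →L[ℂ] H) : H →ₗ[ℂ] H) : Set H) ∩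
    (LinearMap.ker (((1 : H →L[ℂ] H) - T ^ k * (adjoint T) ^ k : H →L[ℂ] H) : H →ₗ[ℂ] H) : Set H))

theorem ContinuousLinearMap.mapsTo_ker_of_commute {R M : Type*} [Semiring R]
    [AddCommMonoid M] [Module R M] [TopologicalSpace M] {A S : M →L[R] M} (h : Commute A S) :
    Set.MapsTo S (LinearMap.ker (A : M →ₗ[R] M)) (LinearMap.ker (A : M →ₗ[R] M)) := by
  intro x hx
  simp only [SetLike.mem_coe, LinearMap.mem_ker, coe_coe] at hx ⊢
  rw [← mul_apply_eq_comp, h.eq, mul_apply_eq_comp, hx, map_zero]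

theorem mapsTo_unitaryPart_of_commute {H : Type*} [NormedAddCommGroup H]
    [InnerProductSpace ℂ H] [CompleteSpace H] {T S : H →L[ℂ] H} (h : Commute T S)
    (h' : Commute (adjoint T) S) : Set.MapsTo S (unitaryPart T) (unitaryPart T) :=
  Set.mapsTo_iInter_iInter fun k =>
    (mapsTo_ker_of_commute <| (Commute.one_left S).sub_left <|
        (h'.pow_left k).mul_left (h.pow_left k)).inter_inter
      (mapsTo_ker_of_commute <| (Commute.one_left S).sub_left <|
        (h.pow_left k).mul_left (h'.pow_left k))

theorem stmt_8_general {H : Type*} [NormedAddCommGroup H] [InnerProductSpace ℂ H] [CompleteSpace H]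
    (T₁ T₂ : H →L[ℂ] H)
    (hc : T₁ * T₂ = T₂ * T₁) (hdc : adjoint T₁ * T₂ = T₂ * adjoint T₁) :
    ∀ x ∈ unitaryPart T₁, T₂ x ∈ unitaryPart T₁ ∧ adjoint T₂ x ∈ unitaryPart T₁ := by
  have h₁₂ : Commute T₁ T₂ := hc
  have h₁'₂ : Commute (adjoint T₁) T₂ := hdc
  have h₁₂' : Commute T₁ (adjoint T₂) := by
    simpa only [star_eq_adjoint, adjoint_adjoint] using h₁'₂.star_star
  have h₁'₂' : Commute (adjoint T₁) (adjoint T₂) := by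
    simpa only [star_eq_adjoint] using h₁₂.star_star
  exact fun x hx => ⟨mapsTo_unitaryPart_of_commute h₁₂ h₁'₂ hx,
    mapsTo_unitaryPart_of_commute h₁₂' h₁'₂' hx⟩

theorem stmt_8 {H : Type*} [NormedAddCommGroup H] [InnerProductSpace ℂ H] [CompleteSpace H]
    (T₁ T₂ : H →L[ℂ] H) (h1 : ‖T₁‖ ≤ 1) (h2 : ‖T₂‖ ≤ 1)
    (hc : T₁ * T₂ = T₂ * T₁) (hdc : adjoint T₁ * T₂ = T₂ * adjoint T₁) :
    ∀ x ∈ unitaryPart T₁, T₂ x ∈ unitaryPart T₁ ∧ adjoint T₂ x ∈ unitaryPart T₁ :=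
  stmt_8_general T₁ T₂ hc hdc
end

section
/- Let V₁, V₂ be commuting bounded operators on a Hilbert space H, i.e. V₁V₂ = V₂V₁, each satisfying Σ_{p=0}^{k} (-1)ᵖ C(k,p) Vᵢ*ᵖVᵢᵖ = (1-r²)^{k-1}(I - Vᵢ*Vᵢ) for all k ≥ 1 (with 0 < r < 1). Then for all k₁, k₂ ≥ 1: Σ_{p₁=0}^{k₁} Σ_{p₂=0}^{k₂} (-1)^{p₁+p₂} C(k₁,p₁)C(k₂,p₂) V₁*^{p₁}V₂*^{p₂}V₁^{p₁}V₂^{p₂} = (1-r²)^{k₁+k₂-2}(I - V₁*V₁ - V₂*V₂ + V₁*V₂*V₁V₂). -/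
set_option maxHeartbeats 800000


open ContinuousLinearMap

theorem stmt_11 {H : Type*} [NormedAddCommGroup H] [InnerProductSpace ℂ H] [CompleteSpace H]
    (V₁ V₂ : H →L[ℂ] H) (hc : V₁ * V₂ = V₂ * V₁)
    (r : ℝ) (hr0 : 0 < r) (hr1 : r < 1)
    (h1 : ∀ k : ℕ, 1 ≤ k →
      ∑ p ∈ Finset.range (k + 1), ((-1 : ℂ) ^ p * ((Nat.choose k p : ℕ) : ℂ)) •
          ((adjoint V₁) ^ p * V₁ ^ p) =
        ((1 - (r : ℂ) ^ 2) ^ (k - 1)) • (1 - adjoint V₁ * V₁))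
    (h2 : ∀ k : ℕ, 1 ≤ k →
      ∑ p ∈ Finset.range (k + 1), ((-1 : ℂ) ^ p * ((Nat.choose k p : ℕ) : ℂ)) •
          ((adjoint V₂) ^ p * V₂ ^ p) =
        ((1 - (r : ℂ) ^ 2) ^ (k - 1)) • (1 - adjoint V₂ * V₂)) :
    ∀ k₁ k₂ : ℕ, 1 ≤ k₁ → 1 ≤ k₂ →
      ∑ p₁ ∈ Finset.range (k₁ + 1), ∑ p₂ ∈ Finset.range (k₂ + 1),
          ((-1 : ℂ) ^ (p₁ + p₂) * ((Nat.choose k₁ p₁ : ℕ) : ℂ) * ((Nat.choose k₂ p₂ : ℕ) : ℂ)) •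
            ((adjoint V₁) ^ p₁ * (adjoint V₂) ^ p₂ * V₁ ^ p₁ * V₂ ^ p₂) =
        ((1 - (r : ℂ) ^ 2) ^ (k₁ + k₂ - 2)) •
          (1 - adjoint V₁ * V₁ - adjoint V₂ * V₂ + adjoint V₁ * adjoint V₂ * V₁ * V₂) := by
  intro k₁ k₂ hk₁ hk₂
  have hcm : Commute V₁ V₂ := hc
  have hadj : Commute (adjoint V₁) (adjoint V₂) := by
    have := hcm.star_star
    simpa [ContinuousLinearMap.star_eq_adjoint] using this
  set c : ℂ := 1 - (r : ℂ) ^ 2 with hcdef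
  -- rewrite each term
  have hterm : ∀ p₁ p₂ : ℕ,
      (adjoint V₁) ^ p₁ * (adjoint V₂) ^ p₂ * V₁ ^ p₁ * V₂ ^ p₂ =
      (adjoint V₂) ^ p₂ * ((adjoint V₁) ^ p₁ * V₁ ^ p₁) * V₂ ^ p₂ := by
    intro p₁ p₂
    rw [(hadj.pow_pow p₁ p₂).eq]
    simp [mul_assoc]
  -- inner sum over p₁
  have hinner : ∀ p₂ : ℕ,
      ∑ p₁ ∈ Finset.range (k₁ + 1),
        ((-1 : ℂ) ^ (p₁ + p₂) * ((Nat.choose k₁ p₁ : ℕ) : ℂ) * ((Nat.choose k₂ p₂ : ℕ) : ℂ)) •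
          ((adjoint V₁) ^ p₁ * (adjoint V₂) ^ p₂ * V₁ ^ p₁ * V₂ ^ p₂)
      = ((-1 : ℂ) ^ p₂ * ((Nat.choose k₂ p₂ : ℕ) : ℂ)) •
          ((adjoint V₂) ^ p₂ *
            (c ^ (k₁ - 1) • ((1 : H →L[ℂ] H) - adjoint V₁ * V₁)) * V₂ ^ p₂) := by
    intro p₂
    rw [← h1 k₁ hk₁]
    rw [Finset.mul_sum, Finset.sum_mul, Finset.smul_sum]
    refine Finset.sum_congr rfl fun p₁ _ => ?_
    rw [hterm p₁ p₂]
    rw [mul_smul_comm, smul_mul_assoc, smul_smul]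
    congr 1
    ring
  rw [Finset.sum_comm]
  rw [Finset.sum_congr rfl fun p₂ _ => hinner p₂]
  -- pull out adjoint V₁ and V₁
  have hmid : ∀ p₂ : ℕ,
      (adjoint V₂) ^ p₂ * (c ^ (k₁ - 1) • ((1 : H →L[ℂ] H) - adjoint V₁ * V₁)) * V₂ ^ p₂
      = c ^ (k₁ - 1) • ((adjoint V₂) ^ p₂ * V₂ ^ p₂
          - adjoint V₁ * ((adjoint V₂) ^ p₂ * V₂ ^ p₂) * V₁) := by
    intro p₂
    have hA : adjoint V₁ * (adjoint V₂) ^ p₂ = (adjoint V₂) ^ p₂ * adjoint V₁ :=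
      (hadj.pow_right p₂).eq
    have hV : V₁ * V₂ ^ p₂ = V₂ ^ p₂ * V₁ := (hcm.pow_right p₂).eq
    rw [mul_smul_comm, smul_mul_assoc]
    congr 1
    rw [mul_sub, sub_mul, mul_one]
    congr 1
    calc (adjoint V₂) ^ p₂ * (adjoint V₁ * V₁) * V₂ ^ p₂
        = ((adjoint V₂) ^ p₂ * adjoint V₁) * (V₁ * V₂ ^ p₂) := by
          simp [mul_assoc]
      _ = (adjoint V₁ * (adjoint V₂) ^ p₂) * (V₂ ^ p₂ * V₁) := by rw [hA, hV]
      _ = adjoint V₁ * ((adjoint V₂) ^ p₂ * V₂ ^ p₂) * V₁ := by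
          simp [mul_assoc]
  rw [Finset.sum_congr rfl fun p₂ _ => by rw [hmid p₂]]
  -- now expand: sum of t₂ • (c^(k₁-1) • (X - A' X A))
  have key : ∑ p₂ ∈ Finset.range (k₂ + 1),
      ((-1 : ℂ) ^ p₂ * ((Nat.choose k₂ p₂ : ℕ) : ℂ)) •
        (c ^ (k₁ - 1) • ((adjoint V₂) ^ p₂ * V₂ ^ p₂
          - adjoint V₁ * ((adjoint V₂) ^ p₂ * V₂ ^ p₂) * V₁))
      = c ^ (k₁ - 1) •
          ((c ^ (k₂ - 1)) • ((1 : H →L[ℂ] H) - adjoint V₂ * V₂)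
            - adjoint V₁ * ((c ^ (k₂ - 1)) • ((1 : H →L[ℂ] H) - adjoint V₂ * V₂)) * V₁) := by
    rw [← h2 k₂ hk₂]
    rw [Finset.mul_sum, Finset.sum_mul, ← Finset.sum_sub_distrib, Finset.smul_sum]
    refine Finset.sum_congr rfl fun p₂ _ => ?_
    simp only [smul_sub, smul_smul, mul_smul_comm, smul_mul_assoc]
    rw [mul_comm (c ^ (k₁ - 1))]
  rw [key]
  -- final algebra
  have hexp : c ^ (k₁ - 1) * c ^ (k₂ - 1) = c ^ (k₁ + k₂ - 2) := by
    rw [← pow_add]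
    congr 1
    omega
  rw [mul_smul_comm, smul_mul_assoc, smul_sub, smul_smul, smul_smul, hexp,
    ← smul_sub]
  congr 1
  have hlast : adjoint V₁ * ((1 : H →L[ℂ] H) - adjoint V₂ * V₂) * V₁
      = adjoint V₁ * V₁ - adjoint V₁ * adjoint V₂ * V₁ * V₂ := by
    rw [mul_sub, sub_mul, mul_one]
    congr 1
    calc adjoint V₁ * (adjoint V₂ * V₂) * V₁
        = adjoint V₁ * adjoint V₂ * (V₂ * V₁) := by simp [mul_assoc]
      _ = adjoint V₁ * adjoint V₂ * (V₁ * V₂) := by rw [← hc]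
      _ = adjoint V₁ * adjoint V₂ * V₁ * V₂ := by simp [mul_assoc]
  rw [hlast]
  abel
end

section
/- With S the bilateral shift S wₙ = w_{n+1} on the weighted basis {wₙ}_{n∈ℤ} with ‖wₙ‖² = 1 + r^{2(α+n)} (0 < r < 1, 0 ≤ α < 1), the operators V₁ = S and V₂ = S² commute but do not doubly commute: V₁V₂*(w₀) = c(0)c(-1) w₋₁ while V₂*V₁(w₀) = c(1)c(0) w₋₁, and c(-1) ≠ c(1), where c(n) = (1 + r^{2(α+n)})/(1 + r^{2(α+n-1)}). -/
/-!
Against the orthogonal basis `wₙ`, the adjoint of the shift `S²` sends `w_m` to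
`(‖w_m‖² / ‖w_{m-2}‖²) w_{m-2}`. Hence `S S*² w₀` and `S*² S w₀` are the multiples
`‖w₀‖²/‖w₋₂‖² = c(0)c(-1)` and `‖w₁‖²/‖w₋₁‖² = c(1)c(0)` of `w₋₁`, and these differ because
`c` is strictly increasing in `n` when `0 < r < 1`.
-/

open ContinuousLinearMap

noncomputable def shiftWeight (r α : ℝ) (n : ℤ) : ℝ :=
  (1 + r ^ (2 * (α + (n : ℝ)))) / (1 + r ^ (2 * (α + (n : ℝ) - 1)))

section WeightedShift

variable {𝕜 E : Type*} [RCLike 𝕜] [NormedAddCommGroup E] [InnerProductSpace 𝕜 E] {w : ℤ → E}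

theorem eq_of_forall_inner_eq_of_dense_span
    (hw : Dense (Submodule.span 𝕜 (Set.range w) : Set E)) {x y : E}
    (h : ∀ n, inner 𝕜 x (w n) = inner 𝕜 y (w n)) : x = y :=
  have hinner : innerSL 𝕜 x = innerSL 𝕜 y := ContinuousLinearMap.ext_on hw <| by
    rintro _ ⟨n, rfl⟩
    exact h n
  ext_inner_right 𝕜 fun v => DFunLike.congr_fun hinner v

theorem pow_apply_of_forall_apply_eq_succ {S : E →L[𝕜] E} (hS : ∀ n, S (w n) = w (n + 1))
    (k : ℕ) (n : ℤ) : (S ^ k) (w n) = w (n + k) := by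
  induction k with
  | zero => simp
  | succ k ih =>
    rw [pow_succ', mul_apply_eq_comp, ih, hS]
    push_cast
    ring_nf

theorem adjoint_apply_of_forall_apply_eq_add [CompleteSpace E]
    (horth : Pairwise fun m n => inner 𝕜 (w m) (w n) = 0)
    (hw : Dense (Submodule.span 𝕜 (Set.range w) : Set E))
    {T : E →L[𝕜] E} {k : ℤ} (hT : ∀ n, T (w n) = w (n + k)) (m : ℤ) :
    adjoint T (w m) = ((‖w m‖ ^ 2 / ‖w (m - k)‖ ^ 2 : ℝ) : 𝕜) • w (m - k) := by
  refine eq_of_forall_inner_eq_of_dense_span hw fun n => ?_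
  rw [adjoint_inner_left, hT, inner_smul_left, RCLike.conj_ofReal]
  by_cases hn : n = m - k
  · subst hn
    rw [sub_add_cancel, inner_self_eq_norm_sq_to_K, inner_self_eq_norm_sq_to_K]
    by_cases h0 : ‖w (m - k)‖ = 0
    · -- the shift maps `w (m - k) = 0` to `w m`, so both sides vanish
      have hm : w m = 0 := by rw [← sub_add_cancel m k, ← hT, norm_eq_zero.mp h0, map_zero]
      simp [hm, h0]
    · have h0' : (‖w (m - k)‖ : 𝕜) ≠ 0 := by exact_mod_cast h0
      push_cast
      field_simp
  · rw [horth (show m ≠ n + k by omega), horth (show m - k ≠ n by omega), mul_zero]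

end WeightedShift

section ShiftWeight

variable {r α : ℝ}

theorem shiftWeight_eq (hr : 0 < r) (n : ℤ) :
    shiftWeight r α n =
      (1 + r ^ 2 * r ^ (2 * (α + n - 1))) / (1 + r ^ (2 * (α + n - 1))) := by
  rw [shiftWeight, ← Real.rpow_two, ← Real.rpow_add hr]
  ring_nf

theorem shiftWeight_lt_succ (hr0 : 0 < r) (hr1 : r < 1) (n : ℤ) :
    shiftWeight r α n < shiftWeight r α (n + 1) := by
  have hexp : r ^ (2 * (α + ((n + 1 : ℤ) : ℝ) - 1)) = r ^ 2 * r ^ (2 * (α + n - 1)) := by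
    rw [← Real.rpow_two, ← Real.rpow_add hr0]
    push_cast
    ring_nf
  rw [shiftWeight_eq hr0, shiftWeight_eq hr0, hexp]
  set v := r ^ (2 * (α + n - 1))
  have hv : 0 < v := by positivity
  have hq : r ^ 2 < 1 := pow_lt_one₀ hr0.le hr1 two_ne_zero
  rw [div_lt_div_iff₀ (by positivity) (by positivity)]
  -- after clearing denominators this is `2 r² < 1 + r⁴`, i.e. `(1 - r²)² > 0`
  nlinarith [mul_pos hv (pow_pos (sub_pos.mpr hq) 2)]

theorem shiftWeight_strictMono (hr0 : 0 < r) (hr1 : r < 1) : StrictMono (shiftWeight r α) :=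
  strictMono_int_of_lt_succ (shiftWeight_lt_succ hr0 hr1)

theorem sq_norm_div_sq_norm_sub_two {E : Type*} [NormedAddCommGroup E] {w : ℤ → E} (hr : 0 ≤ r)
    (hnorm : ∀ n : ℤ, ‖w n‖ ^ 2 = 1 + r ^ (2 * (α + (n : ℝ)))) (n : ℤ) :
    ‖w n‖ ^ 2 / ‖w (n - 2)‖ ^ 2 = shiftWeight r α n * shiftWeight r α (n - 1) := by
  have hpos : ∀ t : ℝ, 1 + r ^ t ≠ 0 := fun t => by positivity
  simp only [shiftWeight, hnorm]
  push_cast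
  rw [show 2 * (α + (n - 1) - 1) = 2 * (α + (n - 2)) by ring,
    show 2 * (α + n - 1) = 2 * (α + (n - 1)) by ring]
  field_simp [hpos]

end ShiftWeight

theorem stmt_15_general {H : Type*} [NormedAddCommGroup H] [InnerProductSpace ℂ H] [CompleteSpace H]
    (r α : ℝ) (hr0 : 0 < r) (hr1 : r < 1)
    (w : ℤ → H)
    (horth : ∀ m n : ℤ, m ≠ n → (inner ℂ (w m) (w n) : ℂ) = 0)
    (hnorm : ∀ n : ℤ, ‖w n‖ ^ 2 = 1 + r ^ (2 * (α + (n : ℝ))))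
    (hdense : Dense ((Submodule.span ℂ (Set.range w)) : Set H))
    (S : H →L[ℂ] H) (hS : ∀ n : ℤ, S (w n) = w (n + 1)) :
    (S ((adjoint (S ^ 2)) (w 0)) =
        (((shiftWeight r α 0 * shiftWeight r α (-1)) : ℝ) : ℂ) • w (-1)) ∧
    ((adjoint (S ^ 2)) (S (w 0)) =
        (((shiftWeight r α 1 * shiftWeight r α 0) : ℝ) : ℂ) • w (-1)) ∧
    shiftWeight r α (-1) ≠ shiftWeight r α 1 ∧
    S * adjoint (S ^ 2) ≠ adjoint (S ^ 2) * S := by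
  have hadj := adjoint_apply_of_forall_apply_eq_add horth hdense
    (T := S ^ 2) (k := 2) fun n => pow_apply_of_forall_apply_eq_succ hS 2 n
  have hratio := sq_norm_div_sq_norm_sub_two hr0.le hnorm
  have hV₁V₂ : S (adjoint (S ^ 2) (w 0)) =
      (((shiftWeight r α 0 * shiftWeight r α (-1)) : ℝ) : ℂ) • w (-1) := by
    rw [hadj, map_smul, hS, hratio]
    norm_num
  have hV₂V₁ : adjoint (S ^ 2) (S (w 0)) =
      (((shiftWeight r α 1 * shiftWeight r α 0) : ℝ) : ℂ) • w (-1) := by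
    rw [hS, zero_add, hadj, hratio]
    norm_num
  have hlt : shiftWeight r α (-1) < shiftWeight r α 1 :=
    shiftWeight_strictMono hr0 hr1 (by norm_num)
  have hc0 : 0 < shiftWeight r α 0 := by unfold shiftWeight; positivity
  have hw : w (-1) ≠ 0 := by
    rw [← norm_ne_zero_iff, ← pow_ne_zero_iff two_ne_zero, hnorm]
    positivity
  refine ⟨hV₁V₂, hV₂V₁, hlt.ne, fun hcomm => ?_⟩
  have hw0 := DFunLike.congr_fun hcomm (w 0)
  rw [mul_apply_eq_comp, mul_apply_eq_comp, hV₁V₂, hV₂V₁] at hw0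
  have hscalar := smul_left_injective ℂ hw hw0
  rw [mul_comm (shiftWeight r α 1)] at hscalar
  exact (mul_lt_mul_of_pos_left hlt hc0).ne (by exact_mod_cast hscalar)

theorem stmt_15 {H : Type*} [NormedAddCommGroup H] [InnerProductSpace ℂ H] [CompleteSpace H]
    (r α : ℝ) (hr0 : 0 < r) (hr1 : r < 1) (hα0 : 0 ≤ α) (hα1 : α < 1)
    (w : ℤ → H)
    (horth : ∀ m n : ℤ, m ≠ n → (inner ℂ (w m) (w n) : ℂ) = 0)
    (hnorm : ∀ n : ℤ, ‖w n‖ ^ 2 = 1 + r ^ (2 * (α + (n : ℝ))))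
    (hdense : Dense ((Submodule.span ℂ (Set.range w)) : Set H))
    (S : H →L[ℂ] H) (hS : ∀ n : ℤ, S (w n) = w (n + 1)) :
    (S ((adjoint (S ^ 2)) (w 0)) =
        (((shiftWeight r α 0 * shiftWeight r α (-1)) : ℝ) : ℂ) • w (-1)) ∧
    ((adjoint (S ^ 2)) (S (w 0)) =
        (((shiftWeight r α 1 * shiftWeight r α 0) : ℝ) : ℂ) • w (-1)) ∧
    shiftWeight r α (-1) ≠ shiftWeight r α 1 ∧
    S * adjoint (S ^ 2) ≠ adjoint (S ^ 2) * S :=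
  stmt_15_general r α hr0 hr1 w horth hnorm hdense S hS
end

section
/- Let T₁, T₂ be doubly commuting bounded operators on a Hilbert space H and let L ⊆ H be a closed subspace reducing T₁ such that -T₁*²T₁²x + (1+r²)T₁*T₁x - r²x = 0 for all x ∈ L. Then the closure of T₂(L) is a closed subspace reducing T₁ on which the same identity holds: -T₁*²T₁²y + (1+r²)T₁*T₁y - r²y = 0 for all y in the closure of T₂(L). -/
open ContinuousLinearMap

section InvariantImage

variable {R E : Type*} [Ring R] [TopologicalSpace E] [AddCommGroup E] [Module R E]
  [IsTopologicalAddGroup E] [ContinuousConstSMul R E]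

theorem Submodule.mapsTo_topologicalClosure_map_of_commute {A B : E →L[R] E}
    (hAB : Commute A B) {L : Submodule R E} (hA : Set.MapsTo A L L) :
    Set.MapsTo A (L.map (B : E →ₗ[R] E)).topologicalClosure
      (L.map (B : E →ₗ[R] E)).topologicalClosure := by
  have hAmap : Set.MapsTo A (L.map (B : E →ₗ[R] E)) (L.map (B : E →ₗ[R] E)) := by
    rintro _ ⟨x, hx, rfl⟩
    exact ⟨A x, hA hx, (DFunLike.congr_fun hAB x).symm⟩
  exact hAmap.closure A.continuous

theorem Submodule.topologicalClosure_map_le_ker_of_commute [T1Space E] {F B : E →L[R] E}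
    (hFB : Commute F B) {L : Submodule R E} (hL : L ≤ LinearMap.ker (F : E →ₗ[R] E)) :
    (L.map (B : E →ₗ[R] E)).topologicalClosure ≤ LinearMap.ker (F : E →ₗ[R] E) := by
  refine Submodule.topologicalClosure_minimal _ ?_ F.isClosed_ker
  rintro _ ⟨x, hx, rfl⟩
  calc F (B x) = B (F x) := DFunLike.congr_fun hFB.eq x
    _ = 0 := by rw [show F x = 0 from hL hx, map_zero]

end InvariantImage

/-- For commuting `T`, `T*` this is `-(T*T - 1)(T*T - r²)`, which vanishes on the two boundary
circles of the annulus `r ≤ |z| ≤ 1`. -/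
noncomputable def annulusDefect {H : Type*} [NormedAddCommGroup H] [InnerProductSpace ℂ H]
    [CompleteSpace H] (T : H →L[ℂ] H) (r : ℝ) : H →L[ℂ] H :=
  -(adjoint T ^ 2 * T ^ 2) + ((1 : ℂ) + (r : ℂ) ^ 2) • (adjoint T * T) - ((r : ℂ) ^ 2) • 1

section AnnulusDefect

variable {H : Type*} [NormedAddCommGroup H] [InnerProductSpace ℂ H] [CompleteSpace H]

theorem annulusDefect_apply (T : H →L[ℂ] H) (r : ℝ) (x : H) :
    annulusDefect T r x = -((adjoint T) ^ 2) ((T ^ 2) x) +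
      ((1 : ℂ) + (r : ℂ) ^ 2) • (adjoint T) (T x) - ((r : ℂ) ^ 2) • x :=
  rfl

theorem commute_annulusDefect {T S : H →L[ℂ] H} (hc : Commute T S)
    (hdc : Commute (adjoint T) S) (r : ℝ) : Commute (annulusDefect T r) S :=
  ((((hdc.pow_left 2).mul_left (hc.pow_left 2)).neg_left.add_left
    ((hdc.mul_left hc).smul_left _)).sub_left ((Commute.one_left S).smul_left _))

end AnnulusDefect

theorem stmt_17_general {H : Type*} [NormedAddCommGroup H] [InnerProductSpace ℂ H] [CompleteSpace H]
    (T₁ T₂ : H →L[ℂ] H) (r : ℝ)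
    (hc : T₁ * T₂ = T₂ * T₁) (hdc : adjoint T₁ * T₂ = T₂ * adjoint T₁)
    (L : Submodule ℂ H)
    (hT₁L : ∀ x ∈ L, T₁ x ∈ L) (hT₁aL : ∀ x ∈ L, adjoint T₁ x ∈ L)
    (hid : ∀ x ∈ L, -((adjoint T₁) ^ 2) ((T₁ ^ 2) x) +
      ((1 : ℂ) + (r : ℂ) ^ 2) • (adjoint T₁) (T₁ x) - ((r : ℂ) ^ 2) • x = 0) :
    (∀ y ∈ (Submodule.map (T₂ : H →ₗ[ℂ] H) L).topologicalClosure,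
        T₁ y ∈ (Submodule.map (T₂ : H →ₗ[ℂ] H) L).topologicalClosure) ∧
    (∀ y ∈ (Submodule.map (T₂ : H →ₗ[ℂ] H) L).topologicalClosure,
        adjoint T₁ y ∈ (Submodule.map (T₂ : H →ₗ[ℂ] H) L).topologicalClosure) ∧
    ∀ y ∈ (Submodule.map (T₂ : H →ₗ[ℂ] H) L).topologicalClosure,
      -((adjoint T₁) ^ 2) ((T₁ ^ 2) y) + ((1 : ℂ) + (r : ℂ) ^ 2) • (adjoint T₁) (T₁ y) -
        ((r : ℂ) ^ 2) • y = 0 := by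
  have hker : L ≤ LinearMap.ker (annulusDefect T₁ r : H →ₗ[ℂ] H) := fun x hx =>
    (annulusDefect_apply T₁ r x).trans (hid x hx)
  refine ⟨fun y hy => ?_, fun y hy => ?_, fun y hy => ?_⟩
  · exact Submodule.mapsTo_topologicalClosure_map_of_commute hc (fun x hx => hT₁L x hx) hy
  · exact Submodule.mapsTo_topologicalClosure_map_of_commute hdc (fun x hx => hT₁aL x hx) hy
  · rw [← annulusDefect_apply]
    exact Submodule.topologicalClosure_map_le_ker_of_commute (commute_annulusDefect hc hdc r)
      hker hy

theorem stmt_17 {H : Type*} [NormedAddCommGroup H] [InnerProductSpace ℂ H] [CompleteSpace H]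
    (T₁ T₂ : H →L[ℂ] H) (r : ℝ) (hr0 : 0 < r) (hr1 : r < 1)
    (hc : T₁ * T₂ = T₂ * T₁) (hdc : adjoint T₁ * T₂ = T₂ * adjoint T₁)
    (L : Submodule ℂ H) (hL : IsClosed (L : Set H))
    (hT₁L : ∀ x ∈ L, T₁ x ∈ L) (hT₁aL : ∀ x ∈ L, adjoint T₁ x ∈ L)
    (hid : ∀ x ∈ L, -((adjoint T₁) ^ 2) ((T₁ ^ 2) x) +
      ((1 : ℂ) + (r : ℂ) ^ 2) • (adjoint T₁) (T₁ x) - ((r : ℂ) ^ 2) • x = 0) :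
    (∀ y ∈ (Submodule.map (T₂ : H →ₗ[ℂ] H) L).topologicalClosure,
        T₁ y ∈ (Submodule.map (T₂ : H →ₗ[ℂ] H) L).topologicalClosure) ∧
    (∀ y ∈ (Submodule.map (T₂ : H →ₗ[ℂ] H) L).topologicalClosure,
        adjoint T₁ y ∈ (Submodule.map (T₂ : H →ₗ[ℂ] H) L).topologicalClosure) ∧
    ∀ y ∈ (Submodule.map (T₂ : H →ₗ[ℂ] H) L).topologicalClosure,
      -((adjoint T₁) ^ 2) ((T₁ ^ 2) y) + ((1 : ℂ) + (r : ℂ) ^ 2) • (adjoint T₁) (T₁ y) -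
        ((r : ℂ) ^ 2) • y = 0 :=
  stmt_17_general T₁ T₂ r hc hdc L hT₁L hT₁aL hid
end
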